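/- For every ε > 0 and every θ₀ ∈ ℝ, the function F_ε(z) = [1 − i(θ₀/(4π))√z]·[1 − √(1−z)] + i(ε/(4π))²·√(1−z)·√z, with √· the principal complex square root, satisfies F_ε(0) = 0 and F_ε(z)/√z → i·ε²/(4π)² as z → 0 (z ≠ 0); equivalently, there exist C, r > 0 such that |F_ε(z) − i(ε²/(4π)²)√z| ≤ C|z| for all |z| < r. Moreover F_ε(λ) ≠ 0 for all real λ > 0 when ε is small enough. -/

import Mathlib

/-!
With `w = √(1 - z)` and `s = √z`, the difference `F_ε(z) - i (ε/4π)² s` factors as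
`(1 - w)(1 - i κ s)` with `κ = θ₀/4π + (ε/4π)²`, and `‖1 - w‖ ≤ ‖z‖` because
`(1 - w)(1 + w) = z` and `Re w ≥ 0`. On the positive axis, `Re F_ε(λ) = 1 - √(1 - λ) > 0` for
`λ ≤ 1`; for `λ > 1` one has `w = i √(λ - 1)`, and `F_ε(λ) = 0` would force
`a (a + β) λ = -1` with `a = θ₀/4π`, `β = (ε/4π)²`. This is impossible as soon as
`θ₀ (4π θ₀ + ε²) ≥ 0`, which holds for all small `ε`.
-/

open Complex

/-- The d = 3, c = 0 resolvent denominator near the threshold: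
`F_ε(z) = [1 − i(θ₀/(4π))√z][1 − √(1−z)] + i(ε/(4π))²√(1−z)√z`
with principal square roots. -/
noncomputable def Fden (θ₀ ε : ℝ) (z : ℂ) : ℂ :=
  (1 - Complex.I * ((θ₀ / (4 * Real.pi) : ℝ) : ℂ) * z ^ ((1 : ℂ) / 2)) *
      (1 - (1 - z) ^ ((1 : ℂ) / 2)) +
    Complex.I * ((ε / (4 * Real.pi) : ℝ) : ℂ) ^ 2 *
      (1 - z) ^ ((1 : ℂ) / 2) * z ^ ((1 : ℂ) / 2)

namespace Complex

theorem sqrt_sq (z : ℂ) : z.sqrt ^ 2 = z := cpow_ofNat_inv_pow z 2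

theorem re_sqrt_nonneg (z : ℂ) : 0 ≤ z.sqrt.re := by
  rw [sqrt, cpow_inv_two_re]
  exact Real.sqrt_nonneg _

theorem norm_sqrt_sq (z : ℂ) : ‖z.sqrt‖ ^ 2 = ‖z‖ := by
  rw [← norm_pow, sqrt_sq]

theorem sqrt_ofReal {x : ℝ} (hx : 0 ≤ x) : (x : ℂ).sqrt = √x := by
  rw [sqrt_of_nonneg (zero_le_real.mpr hx), ofReal_re]

theorem sqrt_neg_ofReal {x : ℝ} (hx : 0 ≤ x) : (-x : ℂ).sqrt = I * √x := by
  rw [sqrt_neg_of_nonneg (zero_le_real.mpr hx), sqrt_ofReal hx]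

/-- Since `Re √(1 - z) ≥ 0`, the factor `1 + √(1 - z)` of `z = (1 - √(1 - z)) (1 + √(1 - z))`
has norm at least one. -/
theorem norm_one_sub_sqrt_one_sub_le (z : ℂ) : ‖1 - (1 - z).sqrt‖ ≤ ‖z‖ := by
  set w := (1 - z).sqrt
  have hfactor : z = (1 - w) * (1 + w) := by
    linear_combination (sqrt_sq (1 - z))
  have hone : 1 ≤ ‖1 + w‖ := by
    calc (1 : ℝ) ≤ (1 + w).re := by simpa using re_sqrt_nonneg (1 - z)
      _ ≤ ‖1 + w‖ := re_le_norm _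
  calc ‖1 - w‖ ≤ ‖1 - w‖ * ‖1 + w‖ := le_mul_of_one_le_right (norm_nonneg _) hone
    _ = ‖z‖ := by rw [← norm_mul, ← hfactor]

end Complex

theorem Fden_eq_sqrt (θ₀ ε : ℝ) (z : ℂ) :
    Fden θ₀ ε z = (1 - I * ((θ₀ / (4 * Real.pi) : ℝ) : ℂ) * z.sqrt) * (1 - (1 - z).sqrt) +
      I * ((ε / (4 * Real.pi) : ℝ) : ℂ) ^ 2 * (1 - z).sqrt * z.sqrt := by
  simp only [Fden, sqrt, one_div]

theorem Fden_zero (θ₀ ε : ℝ) : Fden θ₀ ε 0 = 0 := by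
  simp [Fden_eq_sqrt]

theorem Fden_sub_mul_sqrt_eq (θ₀ ε : ℝ) (z : ℂ) :
    Fden θ₀ ε z - I * ((ε ^ 2 / (4 * Real.pi) ^ 2 : ℝ) : ℂ) * z.sqrt =
      (1 - (1 - z).sqrt) *
        (1 - I * ((θ₀ / (4 * Real.pi) + (ε / (4 * Real.pi)) ^ 2 : ℝ) : ℂ) * z.sqrt) := by
  rw [Fden_eq_sqrt, div_pow]
  push_cast
  ring

theorem norm_Fden_sub_mul_sqrt_le {θ₀ ε : ℝ} {z : ℂ} (hz : ‖z‖ ≤ 1) :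
    ‖Fden θ₀ ε z - I * ((ε ^ 2 / (4 * Real.pi) ^ 2 : ℝ) : ℂ) * z.sqrt‖ ≤
      (1 + |θ₀ / (4 * Real.pi) + (ε / (4 * Real.pi)) ^ 2|) * ‖z‖ := by
  set κ := θ₀ / (4 * Real.pi) + (ε / (4 * Real.pi)) ^ 2
  have hsqrt : ‖z.sqrt‖ ≤ 1 := by
    nlinarith [norm_sqrt_sq z, norm_nonneg z.sqrt]
  have hsecond : ‖1 - I * (κ : ℂ) * z.sqrt‖ ≤ 1 + |κ| :=
    calc ‖1 - I * (κ : ℂ) * z.sqrt‖ ≤ ‖(1 : ℂ)‖ + ‖I * (κ : ℂ) * z.sqrt‖ := norm_sub_le _ _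
      _ = 1 + |κ| * ‖z.sqrt‖ := by simp
      _ ≤ 1 + |κ| := by gcongr; exact mul_le_of_le_one_right (abs_nonneg κ) hsqrt
  rw [Fden_sub_mul_sqrt_eq, norm_mul, mul_comm]
  exact mul_le_mul hsecond (norm_one_sub_sqrt_one_sub_le z) (norm_nonneg _) (by positivity)

/-- The imaginary part vanishes only for `t = -a s`, where the real part is `1 + a (a + β) s²`. -/
theorem one_sub_mul_one_sub_sub_ne_zero {a β : ℝ} (h : 0 ≤ a * (a + β)) (s t : ℝ) :
    (1 - I * a * s) * (1 - I * t) - β * t * s ≠ 0 := by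
  intro hzero
  have hre : 1 - a * s * t - β * t * s = 0 := by simpa using congrArg re hzero
  have him : -t + -(a * s) = 0 := by simpa using congrArg im hzero
  obtain rfl : t = -(a * s) := by linarith
  nlinarith [mul_nonneg h (sq_nonneg s)]

theorem Fden_ofReal_ne_zero {θ₀ ε lam : ℝ} (hθ : 0 ≤ θ₀ * (4 * Real.pi * θ₀ + ε ^ 2))
    (hlam : 0 < lam) : Fden θ₀ ε lam ≠ 0 := by
  have hab : 0 ≤ θ₀ / (4 * Real.pi) * (θ₀ / (4 * Real.pi) + (ε / (4 * Real.pi)) ^ 2) := by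
    have hπ := Real.pi_pos
    rw [show θ₀ / (4 * Real.pi) * (θ₀ / (4 * Real.pi) + (ε / (4 * Real.pi)) ^ 2) =
      θ₀ * (4 * Real.pi * θ₀ + ε ^ 2) / (64 * Real.pi ^ 3) by field_simp; ring]
    positivity
  rw [Fden_eq_sqrt, sqrt_ofReal hlam.le, ← ofReal_pow]
  generalize θ₀ / (4 * Real.pi) = a at hab
  generalize (ε / (4 * Real.pi)) ^ 2 = β at hab
  rcases le_or_gt lam 1 with hle | hlt
  · rw [← ofReal_one, ← ofReal_sub, sqrt_ofReal (sub_nonneg.mpr hle)]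
    intro hzero
    have hre : 1 - √(1 - lam) = 0 := by simpa using congrArg re hzero
    linarith [(Real.sqrt_lt' one_pos).mpr (by linarith : 1 - lam < 1 ^ 2)]
  · have hsqrt : (1 - (lam : ℂ)).sqrt = I * √(lam - 1) := by
      rw [← sqrt_neg_ofReal (by linarith : 0 ≤ lam - 1)]
      push_cast
      ring_nf
    convert one_sub_mul_one_sub_sub_ne_zero hab √lam √(lam - 1) using 1
    rw [hsqrt]
    linear_combination (β * √(lam - 1) * √lam : ℂ) * I_sq

open Filter Topology in
theorem eventually_nonneg_mul_mul_add_sq {c : ℝ} (hc : 0 < c) (θ : ℝ) :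
    ∀ᶠ ε in 𝓝 (0 : ℝ), 0 ≤ θ * (c * θ + ε ^ 2) := by
  rcases le_or_gt 0 θ with hθ | hθ
  · exact Eventually.of_forall fun ε => mul_nonneg hθ (by positivity)
  · have hlim : Tendsto (fun ε : ℝ => c * θ + ε ^ 2) (𝓝 0) (𝓝 (c * θ)) := by
      simpa using ((continuous_pow 2).tendsto (0 : ℝ)).const_add (c * θ)
    filter_upwards [hlim.eventually (gt_mem_nhds (mul_neg_of_pos_of_neg hc hθ))] with ε hε
    exact mul_nonneg_of_nonpos_of_nonpos hθ.le hε.le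

/-- d = 3, c = 0: for every ε > 0 and θ₀ ∈ ℝ, `F_ε(0) = 0` and
`F_ε(z) = i(ε²/(4π)²)√z + O(z)` near `z = 0` (a zero-energy resonance:
the resolvent has a `z^{−1/2}` singularity); moreover for ε small enough
`F_ε(λ) ≠ 0` for all real `λ > 0`. -/
theorem zero_energy_resonance_d3 (θ₀ : ℝ) :
    (∀ ε : ℝ, 0 < ε →
      Fden θ₀ ε 0 = 0 ∧
      ∃ C > (0 : ℝ), ∃ r > (0 : ℝ), ∀ z : ℂ, ‖z‖ < r →
        ‖Fden θ₀ ε z -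
            Complex.I * ((ε ^ 2 / (4 * Real.pi) ^ 2 : ℝ) : ℂ) * z ^ ((1 : ℂ) / 2)‖ ≤
          C * ‖z‖) ∧
    (∃ ε₀ > (0 : ℝ), ∀ ε : ℝ, 0 < ε → ε < ε₀ → ∀ lam : ℝ, 0 < lam →
      Fden θ₀ ε ((lam : ℝ) : ℂ) ≠ 0) := by
  refine ⟨fun ε _ => ⟨Fden_zero θ₀ ε, 1 + |θ₀ / (4 * Real.pi) + (ε / (4 * Real.pi)) ^ 2|,
    by positivity, 1, one_pos, fun z hz => ?_⟩, ?_⟩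
  · rw [one_div, ← sqrt]
    exact norm_Fden_sub_mul_sqrt_le hz.le
  · obtain ⟨ε₀, hε₀, hsmall⟩ :=
      Metric.eventually_nhds_iff.mp
        (eventually_nonneg_mul_mul_add_sq (c := 4 * Real.pi) (by positivity) θ₀)
    refine ⟨ε₀, hε₀, fun ε hε hεε₀ lam hlam => Fden_ofReal_ne_zero (hsmall ?_) hlam⟩
    rwa [Real.dist_0_eq_abs, abs_of_pos hε]
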